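/- arXiv:2307.13478 — 2 statements merged into one kernel-verified Lean document; each statement's English description precedes it below -/
import Mathlib

section
/- Both stagnation points (±√3/2, 0) of the field F are saddle points: the Jacobian of F at each has one strictly positive and one strictly negative real eigenvalue. -/
/-! On the axis `y = 0` the field is symmetric under `y ↦ -y` (`F₁` even, `F₂` odd), so the
Jacobian at `(x, 0)` is diagonal; differentiating gives `diag(-2x, 2x) / (x² + 1/4)²`. For
`x ≠ 0`, in particular at both stagnation points `x = ±√3/2`, the two diagonal entries have
opposite signs, and the coordinate axes are the eigenvectors. -/

open ContinuousLinearMap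

theorem HasFDerivAt.div {𝕜 E : Type*} [NontriviallyNormedField 𝕜] [NormedAddCommGroup E]
    [NormedSpace 𝕜 E] {f g : E → 𝕜} {f' g' : E →L[𝕜] 𝕜} {x : E}
    (hf : HasFDerivAt f f' x) (hg : HasFDerivAt g g' x) (hx : g x ≠ 0) :
    HasFDerivAt (fun y => f y / g y) ((g x ^ 2)⁻¹ • (g x • f' - f x • g')) x := by
  simp only [div_eq_mul_inv]
  refine (hf.mul ((hasFDerivAt_inv hx).comp x hg)).congr_fderiv ?_
  ext v
  simp only [add_apply, smul_apply, sub_apply, comp_apply, toSpanSingleton_apply, smul_eq_mul,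
    Function.comp_apply]
  field_simp
  ring

theorem exists_pos_neg_eigenvectors_diag_of_mul_neg {a b : ℝ} (hab : a * b < 0) :
    ∃ (lam1 lam2 : ℝ) (v1 v2 : ℝ × ℝ), 0 < lam1 ∧ lam2 < 0 ∧ v1 ≠ 0 ∧ v2 ≠ 0 ∧
      (a • fst ℝ ℝ ℝ).prod (b • snd ℝ ℝ ℝ) v1 = lam1 • v1 ∧
      (a • fst ℝ ℝ ℝ).prod (b • snd ℝ ℝ ℝ) v2 = lam2 • v2 := by
  rcases mul_neg_iff.mp hab with ⟨ha, hb⟩ | ⟨ha, hb⟩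
  · exact ⟨a, b, (1, 0), (0, 1), ha, hb, by simp, by simp, by simp, by simp⟩
  · exact ⟨b, a, (0, 1), (1, 0), hb, ha, by simp, by simp, by simp, by simp⟩

noncomputable def vortexPairField : ℝ × ℝ → ℝ × ℝ := fun p =>
  (-(p.2 - 1/2) / (p.1 ^ 2 + (p.2 - 1/2) ^ 2)
      + (p.2 + 1/2) / (p.1 ^ 2 + (p.2 + 1/2) ^ 2) - 1,
    p.1 / (p.1 ^ 2 + (p.2 - 1/2) ^ 2) - p.1 / (p.1 ^ 2 + (p.2 + 1/2) ^ 2))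

theorem hasFDerivAt_vortexPairField_axis (x : ℝ) :
    HasFDerivAt vortexPairField
      (((-2 * x / (x ^ 2 + 1/4) ^ 2) • fst ℝ ℝ ℝ).prod
        ((2 * x / (x ^ 2 + 1/4) ^ 2) • snd ℝ ℝ ℝ)) (x, 0) := by
  have h1 : HasFDerivAt (fun p : ℝ × ℝ => p.1) (fst ℝ ℝ ℝ) (x, 0) := hasFDerivAt_fst
  have h2 : HasFDerivAt (fun p : ℝ × ℝ => p.2) (snd ℝ ℝ ℝ) (x, 0) := hasFDerivAt_snd
  have hA := (h1.pow 2).add ((h2.sub_const (1/2)).pow 2)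
  have hB := (h1.pow 2).add ((h2.add_const (1/2)).pow 2)
  have hA0 : x ^ 2 + (0 - 1/2 : ℝ) ^ 2 ≠ 0 := by positivity
  have hB0 : x ^ 2 + (0 + 1/2 : ℝ) ^ 2 ≠ 0 := by positivity
  have hF₁ := (((h2.sub_const (1/2)).neg.div hA hA0).add
    ((h2.add_const (1/2)).div hB hB0)).sub_const 1
  have hF₂ := (h1.div hA hA0).sub (h1.div hB hB0)
  have hF := hF₁.prodMk hF₂
  refine hF.congr_fderiv ?_
  ext <;>
  simp only [ContinuousLinearMap.prod_apply, add_apply, sub_apply, smul_apply, neg_apply,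
    comp_apply, coe_fst', coe_snd', inl_apply, inr_apply, smul_eq_mul,
    nsmul_eq_mul, Pi.add_apply, Pi.neg_apply] <;> field_simp <;> ring

theorem stmt_7 :
    (let F : ℝ × ℝ → ℝ × ℝ := fun p =>
      (-(p.2 - 1/2) / (p.1 ^ 2 + (p.2 - 1/2) ^ 2)
          + (p.2 + 1/2) / (p.1 ^ 2 + (p.2 + 1/2) ^ 2) - 1,
        p.1 / (p.1 ^ 2 + (p.2 - 1/2) ^ 2) - p.1 / (p.1 ^ 2 + (p.2 + 1/2) ^ 2));
    ∀ p : ℝ × ℝ, p = (Real.sqrt 3 / 2, 0) ∨ p = (-(Real.sqrt 3 / 2), 0) →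
      ∃ (lam1 lam2 : ℝ) (v1 v2 : ℝ × ℝ), 0 < lam1 ∧ lam2 < 0 ∧ v1 ≠ 0 ∧ v2 ≠ 0 ∧
        fderiv ℝ F p v1 = lam1 • v1 ∧ fderiv ℝ F p v2 = lam2 • v2) := by
  intro F p hp
  obtain ⟨x, hx, rfl⟩ : ∃ x : ℝ, x ≠ 0 ∧ p = (x, 0) := by
    have : Real.sqrt 3 / 2 ≠ 0 := by positivity
    rcases hp with rfl | rfl
    exacts [⟨_, this, rfl⟩, ⟨_, neg_ne_zero.mpr this, rfl⟩]
  rw [show F = vortexPairField from rfl, (hasFDerivAt_vortexPairField_axis x).fderiv]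
  refine exists_pos_neg_eigenvectors_diag_of_mul_neg ?_
  have : 2 * x / (x ^ 2 + 1/4) ^ 2 ≠ 0 := by positivity
  rw [neg_mul, neg_div, neg_mul]
  exact neg_neg_of_pos (mul_self_pos.mpr this)
end

section
/- Let 0 < γ < 1 and let x̃ be a real root of x^3 + (2γ-1)x^2 + (γ(γ-1)-1)x + (1-2γ) = 0 with x̃ ∉ {1-γ, -γ}. Set φ = (1-γ)/(x̃+γ)^2 + γ/(x̃-(1-γ))^2. Then (1+φ)(1-φ) < 0. -/
/-!
Clearing the denominators of `φ - 1` gives the numerator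
`(1 - γ) (x - (1 - γ))² + γ (x + γ)² - (x + γ)² (x - (1 - γ))²`, a quartic in `x`. Reduced modulo
the cubic it equals `γ (1 - γ) ((x + γ - 1/2)² + 3/4)`, which is positive for `0 < γ < 1`.
Hence `φ > 1` at every admissible root, so `1 + φ > 0 > 1 - φ`.
-/

def stagnationCubic (γ x : ℝ) : ℝ :=
  x ^ 3 + (2 * γ - 1) * x ^ 2 + (γ * (γ - 1) - 1) * x + (1 - 2 * γ)

lemma phi_numerator_eq (γ x : ℝ) :
    (1 - γ) * (x - (1 - γ)) ^ 2 + γ * (x + γ) ^ 2 - (x + γ) ^ 2 * (x - (1 - γ)) ^ 2 =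
      γ * (1 - γ) * ((x + (2 * γ - 1) / 2) ^ 2 + 3 / 4) +
        (1 - 2 * γ - x) * stagnationCubic γ x := by
  unfold stagnationCubic
  ring

lemma phi_numerator_pos {γ x : ℝ} (h0 : 0 < γ) (h1 : γ < 1) (hroot : stagnationCubic γ x = 0) :
    0 < (1 - γ) * (x - (1 - γ)) ^ 2 + γ * (x + γ) ^ 2 - (x + γ) ^ 2 * (x - (1 - γ)) ^ 2 := by
  rw [phi_numerator_eq, hroot, mul_zero, add_zero]
  have hγ : 0 < γ * (1 - γ) := mul_pos h0 (by linarith)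
  positivity

lemma one_lt_phi {γ x : ℝ} (h0 : 0 < γ) (h1 : γ < 1) (hroot : stagnationCubic γ x = 0)
    (ha : x + γ ≠ 0) (hb : x - (1 - γ) ≠ 0) :
    1 < (1 - γ) / (x + γ) ^ 2 + γ / (x - (1 - γ)) ^ 2 := by
  have hden : 0 < (x + γ) ^ 2 * (x - (1 - γ)) ^ 2 := by positivity
  have hsub : (1 - γ) / (x + γ) ^ 2 + γ / (x - (1 - γ)) ^ 2 - 1 =
      ((1 - γ) * (x - (1 - γ)) ^ 2 + γ * (x + γ) ^ 2 - (x + γ) ^ 2 * (x - (1 - γ)) ^ 2) /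
        ((x + γ) ^ 2 * (x - (1 - γ)) ^ 2) := by
    field_simp
  rw [← sub_pos, hsub]
  exact div_pos (phi_numerator_pos h0 h1 hroot) hden

lemma one_add_mul_one_sub_neg {φ : ℝ} (h : 1 < φ) : (1 + φ) * (1 - φ) < 0 :=
  mul_neg_of_pos_of_neg (by linarith) (by linarith)

theorem stmt_16 (γ xt : ℝ) (h0 : 0 < γ) (h1 : γ < 1)
    (hroot : xt ^ 3 + (2 * γ - 1) * xt ^ 2 + (γ * (γ - 1) - 1) * xt + (1 - 2 * γ) = 0)
    (hne1 : xt ≠ 1 - γ) (hne2 : xt ≠ -γ) :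
    (1 + ((1 - γ) / (xt + γ) ^ 2 + γ / (xt - (1 - γ)) ^ 2)) *
      (1 - ((1 - γ) / (xt + γ) ^ 2 + γ / (xt - (1 - γ)) ^ 2)) < 0 := by
  have ha : xt + γ ≠ 0 := fun h => hne2 (by linarith)
  have hb : xt - (1 - γ) ≠ 0 := fun h => hne1 (by linarith)
  exact one_add_mul_one_sub_neg (one_lt_phi h0 h1 hroot ha hb)
end
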